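/- Let ν > 0, let d ≥ 1 be an integer, and let m ≥ 1 be an integer. Define the half-space lattice sum I(d,ν,m) := Σ_{n > m} Σ_{q ∈ ℤ^{d−1}} (n² + |q|²)^{−ν−d/2}, where n ranges over integers greater than m and |·| is the Euclidean norm on ℝ^{d−1} (the inner sum over q is absent when d = 1). Then I(d,ν,m) ≤ β(d,ν)/m^{2ν}, where β(1,ν) = 1/(2ν) and β(d,ν) = (4 + 2/(2ν + d − 1)) β(d−1,ν) for d > 1. -/

import Mathlib

/-!
Induction on the dimension. Summing out one coordinate `k ∈ ℤ` of `(A + k²)^(-α)`, `A ≥ 1`,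
costs at most the factor `4 + 2/(2α - 1)` and raises the exponent by `1/2`: by the integral test
for an even function antitone on `[0, ∞)` the sum is at most `A^(-α) + 2 ∫₀^∞ (A + x²)^(-α) dx`,
and splitting the integral at `√A` bounds it by `(1 + 1/(2α - 1)) A^(1/2 - α)`. In dimension one
the integral test gives `∑_{n > m} n^(-2ν-1) ≤ m^(-2ν) / (2ν)`.
-/

/-- The prefactor `β(d,ν)`: `β(1,ν) = 1/(2ν)` and
`β(d,ν) = (4 + 2/(2ν+d−1)) β(d−1,ν)` for `d > 1`.  (The value at `d = 0` is unused.) -/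
noncomputable def betaC (ν : ℝ) : ℕ → ℝ
  | 0 => 0
  | 1 => 1 / (2 * ν)
  | d + 2 => (4 + 2 / (2 * ν + (d : ℝ) + 1)) * betaC ν (d + 1)

/-- The half-space lattice sum
`I(d,ν,m) = Σ_{n>m} Σ_{q ∈ ℤ^{d−1}} (n² + |q|²)^{−ν−d/2}`. -/
noncomputable def Isum (d : ℕ) (ν : ℝ) (m : ℕ) : ℝ :=
  ∑' p : {n : ℤ // (m : ℤ) < n} × (Fin (d - 1) → ℤ),
    ((p.1.1 : ℝ) ^ 2 + ∑ i, (p.2 i : ℝ) ^ 2) ^ (-(ν + (d : ℝ) / 2))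

open Set MeasureTheory

section IntegralTest

variable {f : ℝ → ℝ}

theorem summable_int_of_even_of_antitoneOn (heven : f.Even) (anti : AntitoneOn f (Ici 0))
    (integrable : IntegrableOn f (Ioi 0)) (nonneg : ∀ t ∈ Ioi 0, 0 ≤ f t) :
    Summable fun n : ℤ => f n := by
  have hnat := anti.summable_of_integrableOn_Ioi_zero integrable nonneg
  refine hnat.of_nat_of_neg_add_one ?_
  refine ((summable_nat_add_iff 1).mpr hnat).congr fun n => ?_
  rw [← heven]
  push_cast
  ring_nf

theorem tsum_int_le_of_even_of_antitoneOn (heven : f.Even) (anti : AntitoneOn f (Ici 0))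
    (integrable : IntegrableOn f (Ioi 0)) (nonneg : ∀ t ∈ Ioi 0, 0 ≤ f t) :
    ∑' n : ℤ, f n ≤ f 0 + 2 * ∫ x in Ioi 0, f x := by
  have hnat := anti.summable_of_integrableOn_Ioi_zero integrable nonneg
  have hneg : (fun n : ℕ => f ((-(n + 1 : ℤ) : ℤ) : ℝ)) = fun n : ℕ => f (n + 1 : ℕ) := by
    funext n
    rw [← heven]
    push_cast
    ring_nf
  rw [tsum_of_nat_of_neg_add_one hnat (hneg ▸ (summable_nat_add_iff 1).mpr hnat), hneg]
  simp only [Int.cast_natCast]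
  linarith [anti.tsum_le_integral integrable nonneg,
    anti.tsum_add_one_le_integral integrable nonneg]

end IntegralTest

section RpowAddSq

variable {A α : ℝ}

theorem continuous_rpow_add_sq (hA : 0 < A) : Continuous fun x : ℝ => (A + x ^ 2) ^ (-α) :=
  (continuous_const.add (continuous_pow 2)).rpow_const fun x =>
    Or.inl (add_pos_of_pos_of_nonneg hA (sq_nonneg x)).ne'

theorem antitoneOn_rpow_add_sq (hA : 0 < A) (hα : 0 ≤ α) :
    AntitoneOn (fun x : ℝ => (A + x ^ 2) ^ (-α)) (Ici 0) := fun x hx y _ hxy =>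
  Real.rpow_le_rpow_of_nonpos (add_pos_of_pos_of_nonneg hA (sq_nonneg x)) (by gcongr)
    (by linarith)

theorem rpow_add_sq_le_rpow (hA : 0 ≤ A) (hα : 0 ≤ α) {x : ℝ} (hx : 0 < x) :
    (A + x ^ 2) ^ (-α) ≤ x ^ (-(2 * α)) := by
  calc (A + x ^ 2) ^ (-α) ≤ (x ^ 2) ^ (-α) :=
        Real.rpow_le_rpow_of_nonpos (by positivity) (by linarith) (by linarith)
    _ = x ^ (-(2 * α)) := by
        rw [← Real.rpow_natCast, ← Real.rpow_mul hx.le]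
        norm_num

theorem integrableOn_Ioi_rpow_add_sq (hA : 0 < A) (hα : 1 / 2 < α) {c : ℝ} (hc : 0 < c) :
    IntegrableOn (fun x : ℝ => (A + x ^ 2) ^ (-α)) (Ioi c) := by
  refine (integrableOn_Ioi_rpow_of_lt (a := -(2 * α)) (by linarith) hc).mono'
    (continuous_rpow_add_sq hA).aestronglyMeasurable.restrict ?_
  filter_upwards [ae_restrict_mem measurableSet_Ioi] with x hx
  rw [Real.norm_of_nonneg (by positivity)]
  exact rpow_add_sq_le_rpow hA.le (by linarith) (hc.trans hx)

theorem integrableOn_Ioi_zero_rpow_add_sq (hA : 0 < A) (hα : 1 / 2 < α) :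
    IntegrableOn (fun x : ℝ => (A + x ^ 2) ^ (-α)) (Ioi 0) := by
  rw [← Ioc_union_Ioi_eq_Ioi zero_le_one]
  exact ((continuous_rpow_add_sq hA).integrableOn_Icc.mono_set Ioc_subset_Icc_self).union
    (integrableOn_Ioi_rpow_add_sq hA hα one_pos)

-- Split at `√A`: below it the integrand is at most `A ^ (-α)`, above it at most `x ^ (-2α)`.
theorem integral_Ioi_rpow_add_sq_le (hA : 0 < A) (hα : 1 / 2 < α) :
    ∫ x in Ioi 0, (A + x ^ 2) ^ (-α) ≤ (1 + 1 / (2 * α - 1)) * A ^ (1 / 2 - α) := by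
  set s := √A
  have hs : 0 < s := Real.sqrt_pos.mpr hA
  have hsA : s = A ^ (1 / 2 : ℝ) := Real.sqrt_eq_rpow A
  have hs_rpow : ∀ t : ℝ, s ^ t = A ^ (t / 2) := fun t => by
    rw [hsA, ← Real.rpow_mul hA.le]
    ring_nf
  have hlow : ∫ x in Ioc 0 s, (A + x ^ 2) ^ (-α) ≤ A ^ (1 / 2 - α) := by
    calc ∫ x in Ioc 0 s, (A + x ^ 2) ^ (-α) ≤ ∫ _ in Ioc 0 s, A ^ (-α) := by
          refine setIntegral_mono_on ((continuous_rpow_add_sq hA).integrableOn_Icc.mono_set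
            Ioc_subset_Icc_self) (integrableOn_const (by simp) (by simp)) measurableSet_Ioc
            fun x hx => Real.rpow_le_rpow_of_nonpos hA ?_ (by linarith)
          nlinarith [hx.1]
      _ = A ^ (1 / 2 - α) := by
          rw [setIntegral_const, Measure.real, Real.volume_Ioc, sub_zero,
            ENNReal.toReal_ofReal hs.le, smul_eq_mul, hsA, ← Real.rpow_add hA]
          ring_nf
  have hhigh : ∫ x in Ioi s, (A + x ^ 2) ^ (-α) ≤ A ^ (1 / 2 - α) / (2 * α - 1) := by
    calc ∫ x in Ioi s, (A + x ^ 2) ^ (-α) ≤ ∫ x in Ioi s, x ^ (-(2 * α)) :=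
          setIntegral_mono_on (integrableOn_Ioi_rpow_add_sq hA hα hs)
            (integrableOn_Ioi_rpow_of_lt (by linarith) hs) measurableSet_Ioi
            fun x hx => rpow_add_sq_le_rpow hA.le (by linarith) (hs.trans hx)
      _ = A ^ (1 / 2 - α) / (2 * α - 1) := by
          rw [integral_Ioi_rpow_of_lt (by linarith) hs, hs_rpow, neg_div, ← div_neg]
          ring_nf
  rw [← Ioc_union_Ioi_eq_Ioi hs.le, setIntegral_union Ioc_disjoint_Ioi_same measurableSet_Ioi
    ((continuous_rpow_add_sq hA).integrableOn_Icc.mono_set Ioc_subset_Icc_self)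
    (integrableOn_Ioi_rpow_add_sq hA hα hs)]
  linarith [show (1 + 1 / (2 * α - 1)) * A ^ (1 / 2 - α)
    = A ^ (1 / 2 - α) + A ^ (1 / 2 - α) / (2 * α - 1) by ring]

theorem even_rpow_add_sq : (fun x : ℝ => (A + x ^ 2) ^ (-α)).Even := fun x => by
  simp only [even_two.neg_pow]

theorem summable_int_rpow_add_sq (hA : 0 < A) (hα : 1 / 2 < α) :
    Summable fun k : ℤ => (A + (k : ℝ) ^ 2) ^ (-α) :=
  summable_int_of_even_of_antitoneOn even_rpow_add_sq (antitoneOn_rpow_add_sq hA (by linarith))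
    (integrableOn_Ioi_zero_rpow_add_sq hA hα) fun _ _ => by positivity

theorem tsum_int_rpow_add_sq_le (hA : 1 ≤ A) (hα : 1 / 2 < α) :
    ∑' k : ℤ, (A + (k : ℝ) ^ 2) ^ (-α) ≤ (4 + 2 / (2 * α - 1)) * A ^ (1 / 2 - α) := by
  have hA0 : 0 < A := by linarith
  have hzero : (A + (0 : ℝ) ^ 2) ^ (-α) ≤ A ^ (1 / 2 - α) := by
    rw [zero_pow two_ne_zero, add_zero]
    exact Real.rpow_le_rpow_of_exponent_le hA (by linarith)
  have hpos : 0 ≤ A ^ (1 / 2 - α) := by positivity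
  calc ∑' k : ℤ, (A + (k : ℝ) ^ 2) ^ (-α)
      ≤ (A + (0 : ℝ) ^ 2) ^ (-α) + 2 * ∫ x in Ioi 0, (A + x ^ 2) ^ (-α) :=
        tsum_int_le_of_even_of_antitoneOn even_rpow_add_sq
          (antitoneOn_rpow_add_sq hA0 (by linarith)) (integrableOn_Ioi_zero_rpow_add_sq hA0 hα)
          fun _ _ => by positivity
    _ ≤ A ^ (1 / 2 - α) + 2 * ((1 + 1 / (2 * α - 1)) * A ^ (1 / 2 - α)) := by
        gcongr
        exact integral_Ioi_rpow_add_sq_le hA0 hα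
    _ ≤ (4 + 2 / (2 * α - 1)) * A ^ (1 / 2 - α) := by
        rw [← sub_nonneg]
        ring_nf
        exact hpos

end RpowAddSq

section ProdInt

variable {X : Type*} {F : X → ℝ} {α : ℝ}

theorem rpow_add_sq_nonneg (hF : ∀ x, 0 ≤ F x) (y : X × ℤ) :
    0 ≤ (F y.1 + (y.2 : ℝ) ^ 2) ^ (-α) :=
  Real.rpow_nonneg (add_nonneg (hF y.1) (sq_nonneg _)) _

theorem summable_prod_int_rpow_add_sq (hF : ∀ x, 1 ≤ F x) (hα : 1 / 2 < α)
    (hs : Summable fun x => F x ^ (1 / 2 - α)) :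
    Summable fun y : X × ℤ => (F y.1 + (y.2 : ℝ) ^ 2) ^ (-α) := by
  have hF0 : ∀ x, 0 ≤ F x := fun x => zero_le_one.trans (hF x)
  refine (summable_prod_of_nonneg (rpow_add_sq_nonneg hF0)).mpr ⟨fun x => ?_, ?_⟩
  · exact summable_int_rpow_add_sq (A := F x) (by linarith [hF x]) hα
  · exact (hs.mul_left (4 + 2 / (2 * α - 1))).of_nonneg_of_le
      (fun x => tsum_nonneg fun k => rpow_add_sq_nonneg hF0 (x, k))
      fun x => tsum_int_rpow_add_sq_le (hF x) hα

theorem tsum_prod_int_rpow_add_sq_le (hF : ∀ x, 1 ≤ F x) (hα : 1 / 2 < α)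
    (hs : Summable fun x => F x ^ (1 / 2 - α)) :
    ∑' y : X × ℤ, (F y.1 + (y.2 : ℝ) ^ 2) ^ (-α)
      ≤ (4 + 2 / (2 * α - 1)) * ∑' x, F x ^ (1 / 2 - α) := by
  have hsum := summable_prod_int_rpow_add_sq hF hα hs
  rw [hsum.tsum_prod, ← tsum_mul_left]
  exact Summable.tsum_le_tsum (fun x => tsum_int_rpow_add_sq_le (hF x) hα)
    ((summable_prod_of_nonneg (rpow_add_sq_nonneg fun x => zero_le_one.trans (hF x))).mp hsum).2
    (hs.mul_left _)

end ProdInt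

section HalfLine

def natEquivIntGt (m : ℕ) : ℕ ≃ {n : ℤ // (m : ℤ) < n} where
  toFun k := ⟨k + m + 1, by omega⟩
  invFun n := (n.1 - m - 1).toNat
  left_inv k := by simp only; omega
  right_inv n := Subtype.ext (by have := n.2; simp only; omega)

theorem natEquivIntGt_apply_cast (m k : ℕ) :
    ((natEquivIntGt m k : ℤ) : ℝ) = ((k + m + 1 : ℕ) : ℝ) := by
  simp [natEquivIntGt]

variable {p : ℝ}

theorem summable_int_gt_rpow (m : ℕ) (hp : 0 < p) :
    Summable fun n : {n : ℤ // (m : ℤ) < n} => (n : ℝ) ^ (-(p + 1)) := by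
  rw [← (natEquivIntGt m).summable_iff]
  have h := (summable_nat_add_iff (m + 1)).mpr
    (Real.summable_nat_rpow.mpr (by linarith : -(p + 1) < -1))
  refine h.congr fun k => ?_
  simp only [Function.comp_apply, natEquivIntGt_apply_cast, add_assoc]

theorem tsum_int_gt_rpow_le {m : ℕ} (hm : 0 < m) (hp : 0 < p) :
    ∑' n : {n : ℤ // (m : ℤ) < n}, (n : ℝ) ^ (-(p + 1)) ≤ (m : ℝ) ^ (-p) / p := by
  have hm' : (0 : ℝ) < m := Nat.cast_pos.mpr hm
  rw [← (natEquivIntGt m).tsum_eq]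
  simp only [natEquivIntGt_apply_cast]
  calc ∑' k : ℕ, ((k + m + 1 : ℕ) : ℝ) ^ (-(p + 1)) ≤ ∫ x in Ioi (m : ℝ), x ^ (-(p + 1)) :=
        ((Real.antitoneOn_rpow_Ioi_of_exponent_nonpos (by linarith)).mono
          (Ici_subset_Ioi.mpr hm')).tsum_comp_add_le_integral m
          (integrableOn_Ioi_rpow_of_lt (by linarith) hm')
          fun t ht => Real.rpow_nonneg (hm'.trans ht).le _
    _ = (m : ℝ) ^ (-p) / p := by
        rw [integral_Ioi_rpow_of_lt (by linarith) hm', neg_div, ← div_neg]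
        ring_nf

end HalfLine

section HalfSpace

variable {m e : ℕ}

noncomputable def halfSpaceSqNorm (p : {n : ℤ // (m : ℤ) < n} × (Fin e → ℤ)) : ℝ :=
  (p.1.1 : ℝ) ^ 2 + ∑ i, (p.2 i : ℝ) ^ 2

theorem one_le_halfSpaceSqNorm (p : {n : ℤ // (m : ℤ) < n} × (Fin e → ℤ)) :
    1 ≤ halfSpaceSqNorm p := by
  have hn : (1 : ℝ) ≤ p.1.1 := by exact_mod_cast (show (1 : ℤ) ≤ p.1.1 by have := p.1.2; omega)
  have hq : 0 ≤ ∑ i, (p.2 i : ℝ) ^ 2 := Finset.sum_nonneg fun i _ => sq_nonneg _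
  unfold halfSpaceSqNorm
  nlinarith

def halfSpaceConsEquiv (m e : ℕ) :
    ({n : ℤ // (m : ℤ) < n} × (Fin e → ℤ)) × ℤ ≃ {n : ℤ // (m : ℤ) < n} × (Fin (e + 1) → ℤ) :=
  (Equiv.prodAssoc _ _ _).trans
    (Equiv.prodCongr (Equiv.refl _) ((Equiv.prodComm _ _).trans (Fin.consEquiv fun _ => ℤ)))

theorem halfSpaceSqNorm_consEquiv (y : ({n : ℤ // (m : ℤ) < n} × (Fin e → ℤ)) × ℤ) :
    halfSpaceSqNorm (halfSpaceConsEquiv m e y) = halfSpaceSqNorm y.1 + (y.2 : ℝ) ^ 2 := by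
  simp only [halfSpaceSqNorm, halfSpaceConsEquiv, Equiv.trans_apply, Equiv.prodAssoc_apply,
    Equiv.prodCongr_apply, Equiv.prodComm_apply, Prod.map, Equiv.refl_apply, Prod.swap,
    Fin.sum_univ_succ, Fin.consEquiv_apply, Fin.cons_zero, Fin.cons_succ]
  ring

variable {ν α : ℝ}

theorem halfSpaceSqNorm_rpow_of_fin_zero (p : {n : ℤ // (m : ℤ) < n} × (Fin 0 → ℤ)) :
    halfSpaceSqNorm p ^ (-(ν + 1 / 2)) = (p.1.1 : ℝ) ^ (-(2 * ν + 1)) := by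
  have hn : (0 : ℝ) ≤ p.1.1 := by exact_mod_cast (show (0 : ℤ) ≤ p.1.1 by have := p.1.2; omega)
  simp only [halfSpaceSqNorm, Finset.univ_eq_empty, Finset.sum_empty, add_zero,
    ← Real.rpow_natCast, ← Real.rpow_mul hn]
  ring_nf

theorem summable_halfSpaceSqNorm_fin_zero (hν : 0 < ν) :
    Summable fun p : {n : ℤ // (m : ℤ) < n} × (Fin 0 → ℤ) =>
      halfSpaceSqNorm p ^ (-(ν + 1 / 2)) := by
  simp only [halfSpaceSqNorm_rpow_of_fin_zero]
  exact (Equiv.prodUnique _ _).summable_iff.mpr (summable_int_gt_rpow m (by positivity))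

theorem tsum_halfSpaceSqNorm_fin_zero_le (hν : 0 < ν) (hm : 0 < m) :
    ∑' p : {n : ℤ // (m : ℤ) < n} × (Fin 0 → ℤ), halfSpaceSqNorm p ^ (-(ν + 1 / 2))
      ≤ (m : ℝ) ^ (-(2 * ν)) / (2 * ν) := by
  simp only [halfSpaceSqNorm_rpow_of_fin_zero]
  exact ((Equiv.prodUnique _ (Fin 0 → ℤ)).tsum_eq fun n : {n : ℤ // (m : ℤ) < n} =>
    (n : ℝ) ^ (-(2 * ν + 1))).trans_le (tsum_int_gt_rpow_le hm (by positivity))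

theorem summable_halfSpaceSqNorm_succ (hα : 1 / 2 < α)
    (hs : Summable fun p : {n : ℤ // (m : ℤ) < n} × (Fin e → ℤ) =>
      halfSpaceSqNorm p ^ (1 / 2 - α)) :
    Summable fun p : {n : ℤ // (m : ℤ) < n} × (Fin (e + 1) → ℤ) => halfSpaceSqNorm p ^ (-α) := by
  rw [← (halfSpaceConsEquiv m e).summable_iff]
  simpa only [Function.comp_def, halfSpaceSqNorm_consEquiv] using
    summable_prod_int_rpow_add_sq one_le_halfSpaceSqNorm hα hs

theorem tsum_halfSpaceSqNorm_succ_le (hα : 1 / 2 < α)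
    (hs : Summable fun p : {n : ℤ // (m : ℤ) < n} × (Fin e → ℤ) =>
      halfSpaceSqNorm p ^ (1 / 2 - α)) :
    ∑' p : {n : ℤ // (m : ℤ) < n} × (Fin (e + 1) → ℤ), halfSpaceSqNorm p ^ (-α)
      ≤ (4 + 2 / (2 * α - 1)) * ∑' p : {n : ℤ // (m : ℤ) < n} × (Fin e → ℤ),
          halfSpaceSqNorm p ^ (1 / 2 - α) := by
  rw [← (halfSpaceConsEquiv m e).tsum_eq]
  simpa only [halfSpaceSqNorm_consEquiv] using
    tsum_prod_int_rpow_add_sq_le one_le_halfSpaceSqNorm hα hs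

end HalfSpace

theorem halfSpace_summable_and_tsum_le {ν : ℝ} (hν : 0 < ν) (e : ℕ) {m : ℕ} (hm : 1 ≤ m) :
    Summable (fun p : {n : ℤ // (m : ℤ) < n} × (Fin e → ℤ) =>
      halfSpaceSqNorm p ^ (-(ν + ((e + 1 : ℕ) : ℝ) / 2))) ∧
    ∑' p : {n : ℤ // (m : ℤ) < n} × (Fin e → ℤ),
        halfSpaceSqNorm p ^ (-(ν + ((e + 1 : ℕ) : ℝ) / 2))
      ≤ betaC ν (e + 1) / (m : ℝ) ^ (2 * ν) := by
  induction e with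
  | zero =>
    rw [show ((0 + 1 : ℕ) : ℝ) / 2 = 1 / 2 by norm_num]
    refine ⟨summable_halfSpaceSqNorm_fin_zero hν,
      (tsum_halfSpaceSqNorm_fin_zero_le hν hm).trans_eq ?_⟩
    rw [Real.rpow_neg (by positivity), betaC]
    ring
  | succ e ih =>
    have hα : 1 / 2 < ν + ((e + 1 + 1 : ℕ) : ℝ) / 2 := by
      push_cast
      linarith only [hν, (Nat.cast_nonneg e : (0 : ℝ) ≤ e)]
    have hexp : 1 / 2 - (ν + ((e + 1 + 1 : ℕ) : ℝ) / 2) = -(ν + ((e + 1 : ℕ) : ℝ) / 2) := by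
      push_cast
      ring
    have hβ : betaC ν (e + 1 + 1)
        = (4 + 2 / (2 * (ν + ((e + 1 + 1 : ℕ) : ℝ) / 2) - 1)) * betaC ν (e + 1) := by
      rw [betaC]
      push_cast
      ring_nf
    obtain ⟨hs, hle⟩ := ih
    rw [← hexp] at hs hle
    refine ⟨summable_halfSpaceSqNorm_succ hα hs, (tsum_halfSpaceSqNorm_succ_le hα hs).trans ?_⟩
    rw [hβ, mul_div_assoc]
    exact mul_le_mul_of_nonneg_left hle
      (add_nonneg zero_le_four (div_nonneg zero_le_two (by linarith only [hα])))

theorem stmt_6 (ν : ℝ) (hν : 0 < ν) (d : ℕ) (hd : 1 ≤ d) (m : ℕ) (hm : 1 ≤ m) :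
    Summable (fun p : {n : ℤ // (m : ℤ) < n} × (Fin (d - 1) → ℤ) =>
      ((p.1.1 : ℝ) ^ 2 + ∑ i, (p.2 i : ℝ) ^ 2) ^ (-(ν + (d : ℝ) / 2))) ∧
    Isum d ν m ≤ betaC ν d / (m : ℝ) ^ (2 * ν) := by
  obtain ⟨e, rfl⟩ : ∃ e, d = e + 1 := ⟨d - 1, by omega⟩
  exact halfSpace_summable_and_tsum_le hν e hm
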